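/- arXiv:2203.04390 — 9 statements merged into one kernel-verified Lean document; each statement's English description precedes it below -/
import Mathlib

section
/- Suppose the DAG G with parent map Π is simple with respect to the identity order. Then G is decomposable: for every i ∈ {1,…,p} with Π(i) ≠ ∅, the maximal element j = max Π(i) of the parent set satisfies Π(i) ⊆ Π(j) ∪ {j}. (Proposition 1: every simple DAG is decomposable.) -/
/--
Fix `p ≥ 1` and a DAG `G` on `{1,…,p}`, for which the identity order is topological,
given by its parent map `Par`, where `Par i ⊆ {1,…,i-1}`.  If `G` is simple with
respect to the identity order (`Par (i+1) ⊆ Par i ∪ {i}` for all `i ∈ {1,…,p-1}`),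
then `G` is decomposable: for every `i ∈ {1,…,p}` with `Par i ≠ ∅`, the maximal
element `j = max (Par i)` satisfies `Par i ⊆ Par j ∪ {j}`.
-/
theorem simple_dag_is_decomposable (p : ℕ) (hp : 1 ≤ p) (Par : ℕ → Finset ℕ)
    (hpar : ∀ i, 1 ≤ i → i ≤ p → ∀ j ∈ Par i, 1 ≤ j ∧ j < i)
    (hsimple : ∀ i, 1 ≤ i → i + 1 ≤ p → Par (i + 1) ⊆ Par i ∪ {i}) :
    ∀ i, 1 ≤ i → i ≤ p → ∀ h : (Par i).Nonempty,
      (Par i).max' h ∈ Par i ∧ Par i ⊆ Par ((Par i).max' h) ∪ {(Par i).max' h} := by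
  have aux : ∀ d j, 1 ≤ j → j + d ≤ p →
      Par (j + d) ⊆ Par j ∪ Finset.Ico j (j + d) := by
    intro d
    induction d with
    | zero => intro j _ _ x hx; exact Finset.mem_union_left _ (by simpa using hx)
    | succ d ih =>
      intro j hj hjp x hx
      have h1 : Par (j + d + 1) ⊆ Par (j + d) ∪ {j + d} :=
        hsimple (j + d) (by omega) (by omega)
      have hx' := h1 (by simpa [Nat.add_assoc] using hx)
      rcases Finset.mem_union.mp hx' with h | h
      · rcases Finset.mem_union.mp (ih j hj (by omega) h) with h' | h'
        · exact Finset.mem_union_left _ h'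
        · refine Finset.mem_union_right _ ?_
          simp only [Finset.mem_Ico] at h' ⊢; omega
      · refine Finset.mem_union_right _ ?_
        simp only [Finset.mem_singleton] at h
        simp only [Finset.mem_Ico]; omega
  intro i hi hip h
  set j := (Par i).max' h with hj
  have hjmem : j ∈ Par i := Finset.max'_mem _ h
  have hjlt := hpar i hi hip j hjmem
  refine ⟨hjmem, ?_⟩
  intro x hx
  have hxle : x ≤ j := Finset.le_max' _ x hx
  have : Par i ⊆ Par j ∪ Finset.Ico j i := by
    have := aux (i - j) j hjlt.1 (by omega)
    rwa [show j + (i - j) = i by omega] at this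
  rcases Finset.mem_union.mp (this hx) with h' | h'
  · exact Finset.mem_union_left _ h'
  · refine Finset.mem_union_right _ ?_
    simp only [Finset.mem_Ico] at h'
    simp only [Finset.mem_singleton]; omega
end

section
/- If the DAG G with parent map Π is simple with respect to some topological order π, then every parent set of G is complete: for all i ∈ {1,…,p} and all j, k ∈ Π(i) with j < k, one has j ∈ Π(k). (The clique condition on parent sets that makes a simple DAG a perfect, hence decomposable, DAG.) -/
/-!
Along a simple topological order `v 0, v 1, …`, the parents of each vertex lie in the closed
parent set `Par v ∪ {v}` of its predecessor, and the first vertex has no parents. Hence two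
members of one closed parent set stay together, going down the order, until one of them becomes
the current vertex, and then the other is its parent: any two parents of a vertex are adjacent.
Since parents precede their children in the identity order, the smaller one is the parent.
-/

theorem eq_or_mem_parents_or_mem_parents_of_mem_closedParents {α : Type*} [DecidableEq α]
    (Par : α → Finset α) {n : ℕ} (v : Fin n → α)
    (hroot : ∀ h : 0 < n, Par (v ⟨0, h⟩) = ∅)
    (hstep : ∀ (t : ℕ) (h : t + 1 < n),
      Par (v ⟨t + 1, h⟩) ⊆ Par (v ⟨t, Nat.lt_of_succ_lt h⟩) ∪ {v ⟨t, Nat.lt_of_succ_lt h⟩})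
    (s : ℕ) (hs : s < n) :
    ∀ j ∈ Par (v ⟨s, hs⟩) ∪ {v ⟨s, hs⟩}, ∀ k ∈ Par (v ⟨s, hs⟩) ∪ {v ⟨s, hs⟩},
      j = k ∨ j ∈ Par k ∨ k ∈ Par j := by
  induction s with
  | zero =>
    simp only [hroot hs, Finset.empty_union, Finset.mem_singleton]
    rintro j rfl k rfl
    exact Or.inl rfl
  | succ t ih =>
    intro j hj k hk
    rw [Finset.mem_union, Finset.mem_singleton] at hj hk
    rcases hj with hjPar | rfl <;> rcases hk with hkPar | rfl
    · exact ih (Nat.lt_of_succ_lt hs) j (hstep t hs hjPar) k (hstep t hs hkPar)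
    · exact Or.inr (Or.inl hjPar)
    · exact Or.inr (Or.inr hkPar)
    · exact Or.inl rfl

theorem parents_apply_zero_eq_empty {n : ℕ} (Par : Fin n → Finset (Fin n))
    (π : Equiv.Perm (Fin n)) (htopo : ∀ i : Fin n, ∀ j ∈ Par i, π.symm j < π.symm i)
    (h : 0 < n) :
    Par (π ⟨0, h⟩) = ∅ :=
  Finset.eq_empty_of_forall_notMem fun j hj =>
    Nat.not_lt_zero (π.symm j) (by simpa [Fin.lt_def] using htopo _ j hj)

/--
Fix a DAG `G` on vertex set `Fin p` (vertices `1,…,p`, 0-indexed), for which the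
identity order is topological, given by its parent map `Par` with `Par i ⊆ {0,…,i-1}`.
A topological order of `G` is a permutation `π` of `Fin p` with `j ∈ Par i → π⁻¹ j < π⁻¹ i`;
`G` is simple with respect to `π` if `Par (π (i+1)) ⊆ Par (π i) ∪ {π i}` for all `i`.
If `G` is simple with respect to some topological order `π`, then every parent set of `G`
is complete: for all `i` and all `j, k ∈ Par i` with `j < k`, one has `j ∈ Par k`.
-/
theorem simple_dag_parent_sets_complete (p : ℕ) (Par : Fin p → Finset (Fin p))
    (hpar : ∀ i : Fin p, ∀ j ∈ Par i, j < i)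
    (π : Equiv.Perm (Fin p))
    (htopo : ∀ i : Fin p, ∀ j ∈ Par i, π.symm j < π.symm i)
    (hsimple : ∀ (i : ℕ) (h : i + 1 < p),
      Par (π ⟨i + 1, h⟩) ⊆
        Par (π ⟨i, Nat.lt_of_succ_lt h⟩) ∪ {π ⟨i, Nat.lt_of_succ_lt h⟩}) :
    ∀ i : Fin p, ∀ j ∈ Par i, ∀ k ∈ Par i, j < k → j ∈ Par k := by
  intro i j hj k hk hjk
  have hi : π ⟨π.symm i, (π.symm i).isLt⟩ = i := by simp
  have hadj := eq_or_mem_parents_or_mem_parents_of_mem_closedParents Par π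
    (parents_apply_zero_eq_empty Par π htopo) hsimple (π.symm i) (π.symm i).isLt
    j (by rw [hi]; exact Finset.mem_union_left _ hj)
    k (by rw [hi]; exact Finset.mem_union_left _ hk)
  rcases hadj with rfl | hjk | hkj
  · exact absurd hjk (lt_irrefl j)
  · exact hjk
  · exact absurd hjk (hpar j k hkj).not_gt
end

section
/- Given a parent map Π with Π(i) ⊆ {1,…,i−1}, define the simplification Π' by downward recursion: Π'(p) = Π(p) and Π'(i) = Π(i) ∪ (Π'(i+1) \ {i}) for i = p−1, …, 1. Then Π' is a valid parent map (Π'(i) ⊆ {1,…,i−1} for all i), Π(i) ⊆ Π'(i) for every i (so the simplified DAG G' is obtained from G by adding edges), and G' is simple with respect to the identity order. -/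
/--
Fix `p ≥ 1` and a parent map `Par` with `Par i ⊆ {1,…,i-1}`.  Let `Par'` be the
simplification of `Par`, defined by downward recursion `Par' p = Par p` and
`Par' i = Par i ∪ (Par' (i+1) \ {i})` for `i = p-1,…,1`.  Then `Par'` is a valid
parent map (`Par' i ⊆ {1,…,i-1}`), `Par i ⊆ Par' i` for every `i ∈ {1,…,p}` (the
simplified DAG is obtained by adding edges), and the simplified DAG is simple with
respect to the identity order (`Par' (i+1) ⊆ Par' i ∪ {i}` for `i ∈ {1,…,p-1}`).
-/
theorem simplification_is_simple (p : ℕ) (hp : 1 ≤ p) (Par Par' : ℕ → Finset ℕ)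
    (hpar : ∀ i, 1 ≤ i → i ≤ p → ∀ j ∈ Par i, 1 ≤ j ∧ j < i)
    (htop : Par' p = Par p)
    (hrec : ∀ i, 1 ≤ i → i < p → Par' i = Par i ∪ (Par' (i + 1) \ {i})) :
    (∀ i, 1 ≤ i → i ≤ p → ∀ j ∈ Par' i, 1 ≤ j ∧ j < i) ∧
      (∀ i, 1 ≤ i → i ≤ p → Par i ⊆ Par' i) ∧
      (∀ i, 1 ≤ i → i + 1 ≤ p → Par' (i + 1) ⊆ Par' i ∪ {i}) := by
  have valid : ∀ d i, p ≤ i + d → 1 ≤ i → i ≤ p → ∀ j ∈ Par' i, 1 ≤ j ∧ j < i := by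
    intro d
    induction d with
    | zero =>
      intro i hd h1 h2 j hj
      have : i = p := le_antisymm h2 (by simpa using hd)
      subst this
      exact hpar i h1 h2 j (htop ▸ hj)
    | succ d ih =>
      intro i hd h1 h2 j hj
      rcases eq_or_lt_of_le h2 with heq | hlt
      · subst heq
        exact hpar i h1 le_rfl j (htop ▸ hj)
      · rw [hrec i h1 hlt] at hj
        rcases Finset.mem_union.mp hj with h | h
        · exact hpar i h1 h2 j h
        · rcases Finset.mem_sdiff.mp h with ⟨h', hne⟩
          have := ih (i + 1) (by omega) (by omega) hlt j h'
          simp only [Finset.mem_singleton] at hne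
          omega
  refine ⟨fun i h1 h2 => valid (p - 1) i (by omega) h1 h2, ?_, ?_⟩
  · intro i h1 h2
    rcases eq_or_lt_of_le h2 with heq | hlt
    · subst heq; rw [htop]
    · rw [hrec i h1 hlt]; exact Finset.subset_union_left
  · intro i h1 h2
    rw [hrec i h1 (by omega)]
    intro j hj
    by_cases hji : j = i
    · simp [hji]
    · exact Finset.mem_union_left _ (Finset.mem_union_right _ (Finset.mem_sdiff.mpr ⟨hj, by simpa using hji⟩))
end

section
/- Let v, w ∈ X_1×…×X_{i−1} be two depth-(i−1) vertices of the staged tree T_G of the DAG G. Then v ≈_i w (v and w are in the same position of T_G) if and only if v and w agree on every coordinate in Π(j) ∩ {1,…,i−1}, for every j ∈ {i,…,p}. -/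
/-!
Encoding: a depth-(i-1) vertex of the `X`-compatible event tree (a context
`v ∈ X_1 × … × X_{i-1}`) is represented by any full assignment
`v : (k : Fin p) → X k`, of which only the coordinates `k < i` are relevant.
Concatenation `(v, z)` is represented by a full assignment agreeing with `v`
below `i` and with the given suffix `z` on `[i, j)`.
-/

variable {p : ℕ}

/-- `v` and `w` agree on all coordinates below `i`, i.e. they represent the same
depth-(i-1) vertex (context) of the event tree. -/
def agreeBelow {X : Fin p → Type} (i : Fin p) (v w : (k : Fin p) → X k) : Prop :=
  ∀ k : Fin p, k < i → v k = w k

/-- Two depth-(i-1) vertices `v, w` are in the same position, `v ≈_i w`: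
for every `j ∈ {i,…,p}` and every suffix `z ∈ X_i × … × X_{j-1}`, the
concatenations `(v,z)` and `(w,z)` are in the same stage `~_j`.  Here `rel j`
is the stage relation `~_j` and the concatenations are represented by full
assignments `v', w'` with prefix `v` (resp. `w`) below `i` and common values
on `[i, j)`. -/
def samePos {X : Fin p → Type}
    (rel : Fin p → ((k : Fin p) → X k) → ((k : Fin p) → X k) → Prop)
    (i : Fin p) (v w : (k : Fin p) → X k) : Prop :=
  ∀ j : Fin p, i ≤ j → ∀ v' w' : (k : Fin p) → X k,
    agreeBelow i v' v → agreeBelow i w' w →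
    (∀ k : Fin p, i ≤ k → k < j → v' k = w' k) → rel j v' w'

/-- The staging `~^G` of the staged tree `T_G` of the DAG `G` with parent map `Par`:
`v ~^G_i w` iff `v` and `w` agree on every coordinate in `Par i`. -/
def relG {X : Fin p → Type} (Par : Fin p → Finset (Fin p))
    (i : Fin p) (v w : (k : Fin p) → X k) : Prop :=
  ∀ k ∈ Par i, v k = w k

/--
Let `v, w` be two depth-(i-1) vertices of the staged tree `T_G` of the DAG `G`.
Then `v ≈_i w` (they are in the same position of `T_G`) if and only if `v` and `w`
agree on every coordinate in `Par j ∩ {1,…,i-1}`, for every `j ∈ {i,…,p}`.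
-/
theorem samePos_TG_iff {X : Fin p → Type} [∀ k, Fintype (X k)] [∀ k, Nonempty (X k)]
    (Par : Fin p → Finset (Fin p)) (hpar : ∀ i : Fin p, ∀ j ∈ Par i, j < i)
    (i : Fin p) (v w : (k : Fin p) → X k) :
    samePos (relG Par) i v w ↔
      ∀ j : Fin p, i ≤ j → ∀ k ∈ Par j, k < i → v k = w k := by
  constructor
  · intro h j hij k hk hki
    have h2 := h j hij v (fun m => if m < i then w m else v m)
      (fun _ _ => rfl) (fun m hm => by simp [hm]) (fun m him _ => by
        simp [not_lt.mpr him])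
    have := h2 k hk
    simpa [hki] using this
  · intro h j hij v' w' hv hw hmid k hk
    rcases lt_or_ge k i with hki | hik
    · rw [hv k hki, hw k hki]; exact h j hij k hk hki
    · exact hmid k hik (hpar j k hk)
end

section
/- Assume each X_k has at least two elements. The staging ~^G of the staged tree T_G is simple (every pair of vertices in the same stage is in the same position) if and only if the DAG G is simple with respect to the identity order, i.e., if and only if Π(i+1) ⊆ Π(i) ∪ {i} for all i ∈ {1,…,p−1}. (Proposition 2: T_G is simple if and only if G is simple.) -/
/-!
Encoding: a depth-(i-1) vertex of the `X`-compatible event tree (a context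
`v ∈ X_1 × … × X_{i-1}`) is represented by any full assignment
`v : (k : Fin p) → X k`, of which only the coordinates `k < i` are relevant.
-/

variable {p : ℕ}

lemma par_key (Par : Fin p → Finset (Fin p))
    (hG : ∀ (i : ℕ) (h : i + 1 < p),
        Par ⟨i + 1, h⟩ ⊆
          Par ⟨i, Nat.lt_of_succ_lt h⟩ ∪ {(⟨i, Nat.lt_of_succ_lt h⟩ : Fin p)}) :
    ∀ (n : ℕ) (j : Fin p), (j : ℕ) = n → ∀ i : Fin p, i ≤ j →
      ∀ k ∈ Par j, k ∈ Par i ∨ ((i : ℕ) ≤ (k : ℕ) ∧ (k : ℕ) < (j : ℕ)) := by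
  intro n
  induction n with
  | zero =>
    intro j hj i hij k hk
    have : i = j := Fin.ext (by have := Fin.le_def.mp hij; omega)
    subst this; exact Or.inl hk
  | succ n ih =>
    intro j hj i hij k hk
    by_cases hie : i = j
    · subst hie; exact Or.inl hk
    · have hin : (i : ℕ) ≤ n := by
        have h1 : (i : ℕ) ≤ (j : ℕ) := hij
        have h2 : (i : ℕ) ≠ (j : ℕ) := fun e => hie (Fin.ext e)
        omega
      have hnp : n + 1 < p := hj ▸ j.isLt
      have hjeq : j = ⟨n + 1, hnp⟩ := Fin.ext (by simp [hj])
      have hsub := hG n hnp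
      rw [hjeq] at hk
      have hmem := hsub hk
      simp only [Finset.mem_union, Finset.mem_singleton] at hmem
      rcases hmem with hk' | hk'
      · rcases ih ⟨n, Nat.lt_of_succ_lt hnp⟩ rfl i (Fin.le_def.mpr (by simpa using hin)) k hk'
          with hcase | hcase
        · exact Or.inl hcase
        · refine Or.inr ⟨hcase.1, ?_⟩
          have h2 := hcase.2
          simp only [Fin.val_mk] at h2
          omega
      · refine Or.inr ⟨?_, ?_⟩
        · rw [hk']; simpa using hin
        · rw [hk']; simp only [Fin.val_mk]; omega

/--
**Proposition 2.**
Assume each `X k` has at least two elements.  The staging `~^G` of the staged tree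
`T_G` is simple (every pair of vertices in the same stage is in the same position)
if and only if the DAG `G` is simple with respect to the identity order, i.e. iff
`Par (i+1) ⊆ Par i ∪ {i}` for all `i ∈ {1,…,p-1}`.
-/
theorem TG_simple_iff_G_simple {X : Fin p → Type}
    [∀ k, Fintype (X k)] [∀ k, Nontrivial (X k)]
    (Par : Fin p → Finset (Fin p)) (hpar : ∀ i : Fin p, ∀ j ∈ Par i, j < i) :
    (∀ (i : Fin p) (v w : (k : Fin p) → X k),
        relG Par i v w → samePos (relG Par) i v w) ↔
      (∀ (i : ℕ) (h : i + 1 < p),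
        Par ⟨i + 1, h⟩ ⊆
          Par ⟨i, Nat.lt_of_succ_lt h⟩ ∪ {(⟨i, Nat.lt_of_succ_lt h⟩ : Fin p)}) := by
  constructor
  · intro hs i h k hk
    by_contra hk'
    simp only [Finset.mem_union, Finset.mem_singleton, not_or] at hk'
    obtain ⟨hk1, hk2⟩ := hk'
    set i0 : Fin p := ⟨i, Nat.lt_of_succ_lt h⟩ with hi0
    set i1 : Fin p := ⟨i + 1, h⟩ with hi1
    have hki : (k : ℕ) < i := by
      have h1 : k < i1 := hpar _ _ hk
      have h2 : (k : ℕ) ≠ i := fun e => hk2 (Fin.ext e)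
      have := Fin.lt_def.mp h1
      simp [hi1] at this
      omega
    classical
    set v0 : (k : Fin p) → X k := fun k => Nonempty.some inferInstance with hv0
    obtain ⟨b, hb⟩ := exists_ne (v0 k)
    set w : (k : Fin p) → X k := Function.update v0 k b with hw
    have hrel : relG Par i0 v0 w := by
      intro m hm
      have hne : m ≠ k := fun e => hk1 (e ▸ hm)
      simp [hw, Function.update_of_ne hne]
    have hsp := hs i0 v0 w hrel
    set w' : (k : Fin p) → X k := Function.update w i0 (v0 i0) with hw'
    have hres := hsp i1 (by simp [hi0, hi1, Fin.le_def]) v0 w'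
      (fun _ _ => rfl)
      (by intro m hm
          have hne : m ≠ i0 := fun e => absurd (e ▸ hm) (lt_irrefl _)
          simp [hw', Function.update_of_ne hne])
      (by intro m h1 h2
          have hm : m = i0 := by
            apply Fin.ext
            have := Fin.le_def.mp h1
            have := Fin.lt_def.mp h2
            simp_all [hi0, hi1]
            omega
          subst hm
          simp [hw'])
    have := hres k hk
    have hne : k ≠ i0 := fun e => hk2 e
    rw [hw', Function.update_of_ne hne, hw, Function.update_self] at this
    exact hb this.symm
  · intro hG i v w hrel j hij v' w' hv' hw' hmid k hk
    rcases par_key Par hG (j : ℕ) j rfl i hij k hk with hki | ⟨h1, h2⟩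
    · have hlt : k < i := hpar _ _ hki
      rw [hv' k hlt, hw' k hlt]
      exact hrel k hki
    · exact hmid k (Fin.le_def.mpr h1) (Fin.lt_def.mpr h2)
end

section
/- For any staging ~, the family of position relations ≈ = (≈_1,…,≈_p) is itself a staging (each ≈_i is an equivalence relation and ≈_i ⊆ ~_i), and the simplified staged tree T^s with staging ≈ is simple: if v ≈_i w then, for every j ∈ {i,…,p} and every z ∈ X_i×…×X_{j−1}, the concatenations (v,z) and (w,z) are in the same position with respect to the staging ≈. -/
/-!
Encoding: a depth-(i-1) vertex of the `X`-compatible event tree (a context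
`v ∈ X_1 × … × X_{i-1}`) is represented by any full assignment
`v : (k : Fin p) → X k`, of which only the coordinates `k < i` are relevant.
-/

variable {p : ℕ}

/-- A staging: a family of equivalence relations `~_i`, one for each `i`, on the
depth-(i-1) vertices; `rel i` is encoded on full assignments, so it must only
depend on the coordinates below `i` (field `meas`). -/
structure Staging (p : ℕ) (X : Fin p → Type) where
  rel : Fin p → ((k : Fin p) → X k) → ((k : Fin p) → X k) → Prop
  equiv : ∀ i, Equivalence (rel i)
  meas : ∀ (i : Fin p) (v v' w w' : (k : Fin p) → X k),
    agreeBelow i v v' → agreeBelow i w w' → rel i v w → rel i v' w'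

/--
For any staging `~`, the family of position relations `≈ = (≈_1,…,≈_p)` is itself a
staging (each `≈_i` is an equivalence relation on the depth-(i-1) vertices, and
`≈_i ⊆ ~_i`), and the simplified staged tree `T^s` with staging `≈` is simple:
if `v ≈_i w` then, for every `j ∈ {i,…,p}` and every `z ∈ X_i × … × X_{j-1}`, the
concatenations `(v,z)` and `(w,z)` are in the same position w.r.t. the staging `≈`.
-/
theorem position_staging_is_simple_staging {X : Fin p → Type}
    [∀ k, Fintype (X k)] [∀ k, Nonempty (X k)] (S : Staging p X) :
    (∀ i : Fin p, Equivalence (samePos S.rel i)) ∧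
      (∀ (i : Fin p) (v v' w w' : (k : Fin p) → X k),
        agreeBelow i v v' → agreeBelow i w w' →
        samePos S.rel i v w → samePos S.rel i v' w') ∧
      (∀ (i : Fin p) (v w : (k : Fin p) → X k), samePos S.rel i v w → S.rel i v w) ∧
      (∀ (i : Fin p) (v w : (k : Fin p) → X k),
        samePos S.rel i v w → samePos (samePos S.rel) i v w) := by
  classical
  have hrefl : ∀ (i : Fin p) (v : (k : Fin p) → X k), samePos S.rel i v v := by
    intro i v j hij v' w' hv' hw' heq
    refine S.meas j v' v' v' w' (fun k _ => rfl) ?_ ((S.equiv j).refl v')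
    intro k hk
    by_cases hki : k < i
    · rw [hv' k hki, hw' k hki]
    · exact heq k (le_of_not_gt hki) hk
  have hsymm : ∀ (i : Fin p) (v w : (k : Fin p) → X k),
      samePos S.rel i v w → samePos S.rel i w v := by
    intro i v w h j hij v' w' hv' hw' heq
    exact (S.equiv j).symm (h j hij w' v' hw' hv' (fun k h1 h2 => (heq k h1 h2).symm))
  have htrans : ∀ (i : Fin p) (u v w : (k : Fin p) → X k),
      samePos S.rel i u v → samePos S.rel i v w → samePos S.rel i u w := by
    intro i u v w h1 h2 j hij v' w' hv' hw' heq
    set m : (k : Fin p) → X k := fun k => if h : k < i then v k else v' k with hm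
    have hma : agreeBelow i m v := fun k hk => by simp [hm, hk]
    have hme : ∀ k : Fin p, i ≤ k → m k = v' k := fun k hk => by
      simp [hm, not_lt_of_ge hk]
    exact (S.equiv j).trans
      (h1 j hij v' m hv' hma (fun k h1 h2 => (hme k h1).symm))
      (h2 j hij m w' hma hw' (fun k h1 h2 => (hme k h1).trans (heq k h1 h2)))
  have hmeas : ∀ (i : Fin p) (v v' w w' : (k : Fin p) → X k),
      agreeBelow i v v' → agreeBelow i w w' →
      samePos S.rel i v w → samePos S.rel i v' w' := by
    intro i v v' w w' hvv hww h j hij a b ha hb heq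
    exact h j hij a b (fun k hk => (ha k hk).trans (hvv k hk).symm)
      (fun k hk => (hb k hk).trans (hww k hk).symm) heq
  refine ⟨fun i => ⟨hrefl i, fun {v w} => hsymm i v w,
      fun {u v w} => htrans i u v w⟩, hmeas, ?_, ?_⟩
  · intro i v w h
    exact h i le_rfl v w (fun _ _ => rfl) (fun _ _ => rfl)
      (fun k h1 h2 => absurd h1 (not_le_of_gt h2))
  · intro i v w h j hij v' w' hv' hw' heq j' hjj' v'' w'' hv'' hw'' heq'
    refine h j' (le_trans hij hjj') v'' w'' ?_ ?_ ?_
    · intro k hk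
      exact (hv'' k (lt_of_lt_of_le hk hij)).trans (hv' k hk)
    · intro k hk
      exact (hw'' k (lt_of_lt_of_le hk hij)).trans (hw' k hk)
    · intro k h1 h2
      by_cases hk : k < j
      · rw [hv'' k hk, hw'' k hk]
        exact heq k h1 hk
      · exact heq' k (le_of_not_gt hk) h2
end

section
/- Let ~ be a staging and ≈ its position staging. If σ is any simple staging such that σ_i ⊆ ~_i for all i (every pair of vertices in a common σ-stage lies in a common ~-stage), then σ_i ⊆ ≈_i for all i. Hence ≈ is the coarsest simple staging refining ~. -/
/-!
Encoding: a depth-(i-1) vertex of the `X`-compatible event tree (a context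
`v ∈ X_1 × … × X_{i-1}`) is represented by any full assignment
`v : (k : Fin p) → X k`, of which only the coordinates `k < i` are relevant.
-/

variable {p : ℕ}

/--
Let `~` (here `T`) be a staging and `≈` its position staging.  If `σ` (here `S`)
is any simple staging with `σ_i ⊆ ~_i` for all `i`, then `σ_i ⊆ ≈_i` for all `i`.
Hence `≈` is the coarsest simple staging refining `~`.
-/
theorem position_staging_coarsest_simple_refinement {X : Fin p → Type}
    [∀ k, Fintype (X k)] [∀ k, Nonempty (X k)] (S T : Staging p X)
    (hsimple : ∀ (i : Fin p) (v w : (k : Fin p) → X k),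
      S.rel i v w → samePos S.rel i v w)
    (hrefines : ∀ (i : Fin p) (v w : (k : Fin p) → X k),
      S.rel i v w → T.rel i v w) :
    ∀ (i : Fin p) (v w : (k : Fin p) → X k), S.rel i v w → samePos T.rel i v w := by
  intro i v w hvw j hij v' w' hv' hw' heq
  have hvw' : S.rel i v' w' :=
    S.meas i v v' w w' (fun k hk => (hv' k hk).symm) (fun k hk => (hw' k hk).symm) hvw
  exact hrefines j v' w'
    (hsimple i v' w' hvw' j hij v' w' (fun _ _ => rfl) (fun _ _ => rfl) heq)
end

section
/- A strictly positive probability mass function P on X_1×…×X_p is Markov to the DAG G with parent map Π if and only if P belongs to the staged tree model M(~^G) of the staging ~^G of T_G. Consequently the Bayesian network model M_G equals M(~^G): every Bayesian network model equals the model of its associated staged tree. -/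
/-!
Encoding: a depth-(i-1) vertex of the `X`-compatible event tree (a context
`v ∈ X_1 × … × X_{i-1}`) is represented by any full assignment
`v : (k : Fin p) → X k`, of which only the coordinates `k < i` are relevant.
-/

variable {p : ℕ}

/-- The staged tree model `M(~)`: the set of strictly positive probability mass
functions `P` on `X_1 × … × X_p` for which there exist maps `y i` assigning to each
depth-(i-1) vertex a strictly positive pmf on `X i`, constant on the stages of
`~_i`, with `P x = ∏ i, y i (x_1,…,x_{i-1}) (x_i)` for all `x`. -/
def memModel {X : Fin p → Type} [∀ k, Fintype (X k)]
    (rel : Fin p → ((k : Fin p) → X k) → ((k : Fin p) → X k) → Prop)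
    (P : ((k : Fin p) → X k) → ℝ) : Prop :=
  (∀ x, 0 < P x) ∧ (∑ x, P x = 1) ∧
    ∃ y : (i : Fin p) → ((k : Fin p) → X k) → X i → ℝ,
      (∀ i v x, 0 < y i v x) ∧
      (∀ i v, ∑ x, y i v x = 1) ∧
      (∀ i v w, rel i v w → y i v = y i w) ∧
      (∀ x, P x = ∏ i, y i x (x i))

open Classical in
/-- The marginal `P(X_A = v_A)` of the coordinates in the finite set `A` at `v`. -/
noncomputable def margSet {X : Fin p → Type} [∀ k, Fintype (X k)]
    (P : ((k : Fin p) → X k) → ℝ) (A : Finset (Fin p)) (v : (k : Fin p) → X k) :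
    ℝ :=
  ∑ u : (k : Fin p) → X k, if ∀ k ∈ A, u k = v k then P u else 0

/-- `P` is Markov to the DAG `G` with parent map `Par`:
`P x = ∏ i, P(X_i = x_i | X_{Par i} = x_{Par i})` for all `x`, where the conditional
probabilities are ratios of the corresponding marginals. -/
noncomputable def Markov {X : Fin p → Type} [∀ k, Fintype (X k)]
    (Par : Fin p → Finset (Fin p)) (P : ((k : Fin p) → X k) → ℝ) : Prop :=
  ∀ x : (k : Fin p) → X k,
    P x = ∏ i : Fin p, margSet P (insert i (Par i)) x / margSet P (Par i) x

set_option linter.unusedSectionVars false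

section AuxST

open Finset Function

variable {p : ℕ}

section Aux

variable {X : Fin p → Type} [∀ k, Fintype (X k)] [∀ k, Nonempty (X k)]

private lemma sum_update_aux (i : Fin p) (G : ((k : Fin p) → X k) → ℝ) :
    ∑ u : (k : Fin p) → X k, ∑ a : X i, G (Function.update u i a)
      = (Fintype.card (X i) : ℝ) * ∑ u : (k : Fin p) → X k, G u := by
  have hbij : Function.Bijective
      (fun q : (((k : Fin p) → X k) × X i) => (Function.update q.1 i q.2, q.1 i)) := by
    apply Function.Involutive.bijective
    intro q
    simp [Function.update_idem]
  have h1 := Fintype.sum_bijective _ hbij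
    (fun q : (((k : Fin p) → X k) × X i) => G (Function.update q.1 i q.2))
    (fun q : (((k : Fin p) → X k) × X i) => G q.1) (fun q => rfl)
  rw [Fintype.sum_prod_type] at h1
  rw [h1, Fintype.sum_prod_type]
  simp only [Finset.sum_const, card_univ, nsmul_eq_mul]
  rw [Finset.mul_sum]

private lemma swap_aux (i : Fin p) (f h h' : ((k : Fin p) → X k) → ℝ)
    (hf : ∀ u a, f (Function.update u i a) = f u)
    (hh : ∀ u, ∑ a : X i, h (Function.update u i a)
        = ∑ a : X i, h' (Function.update u i a)) :
    ∑ u, f u * h u = ∑ u, f u * h' u := by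
  have hc : (Fintype.card (X i) : ℝ) ≠ 0 := by
    exact_mod_cast Fintype.card_ne_zero
  apply mul_left_cancel₀ hc
  rw [← sum_update_aux i (fun u => f u * h u), ← sum_update_aux i (fun u => f u * h' u)]
  apply Finset.sum_congr rfl
  intro u _
  simp only [hf]
  rw [← Finset.mul_sum, ← Finset.mul_sum, hh u]

variable (y : (i : Fin p) → ((k : Fin p) → X k) → X i → ℝ)

private noncomputable def Ffun (m : ℕ) (u : (k : Fin p) → X k) : ℝ :=
  ∏ j ∈ Finset.univ.filter (fun j : Fin p => (j : ℕ) < m), y j u (u j)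

open Classical in
private noncomputable def Sfun (x : (k : Fin p) → X k) (B : Finset (Fin p)) (m : ℕ) : ℝ :=
  ∑ u : (k : Fin p) → X k, (if ∀ k ∈ B, u k = x k then (1:ℝ) else 0) * Ffun y m u

private lemma Ffun_succ (m : ℕ) (hm : m < p) (u : (k : Fin p) → X k) :
    Ffun y (m + 1) u = y ⟨m, hm⟩ u (u ⟨m, hm⟩) * Ffun y m u := by
  unfold Ffun
  have hfil : Finset.univ.filter (fun j : Fin p => (j : ℕ) < m + 1)
      = insert ⟨m, hm⟩ (Finset.univ.filter (fun j : Fin p => (j : ℕ) < m)) := by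
    ext j
    simp [Fin.ext_iff]
    omega
  rw [hfil, Finset.prod_insert (by simp)]

variable (Par : Fin p → Finset (Fin p)) (hpar : ∀ i : Fin p, ∀ j ∈ Par i, j < i)
  (hy2 : ∀ i v w, relG Par i v w → y i v = y i w)

include hpar hy2 in
private lemma Ffun_update (m : ℕ) (c : Fin p) (hc : m ≤ (c : ℕ))
    (u : (k : Fin p) → X k) (a : X c) :
    Ffun y m (Function.update u c a) = Ffun y m u := by
  unfold Ffun
  apply Finset.prod_congr rfl
  intro j hj
  simp only [Finset.mem_filter] at hj
  have hjc : j ≠ c := by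
    intro h
    subst h
    omega
  have h1 : Function.update u c a j = u j := Function.update_of_ne hjc a u
  have h2 : y j (Function.update u c a) = y j u := by
    apply hy2
    intro k hk
    have hkj : k < j := hpar j k hk
    have : k ≠ c := by
      intro h
      subst h
      have : (k : ℕ) < (j : ℕ) := hkj
      omega
    exact Function.update_of_ne this a u
  rw [h1, h2]

include hpar hy2 in
private lemma y_update (c : Fin p) (u : (k : Fin p) → X k) (a : X c) :
    y c (Function.update u c a) = y c u := by
  apply hy2
  intro k hk
  have : k ≠ c := Fin.ne_of_lt (hpar c k hk)
  exact Function.update_of_ne this a u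

include hpar hy2 in
private lemma step_aux (hy1 : ∀ i v, ∑ a, y i v a = 1)
    (x : (k : Fin p) → X k) (B : Finset (Fin p)) (m : ℕ) (hm : m < p)
    (hB : ∀ k ∈ B, (k : ℕ) < m) :
    Sfun y x B m = (Fintype.card (X ⟨m, hm⟩) : ℝ) * Sfun y x B (m + 1) := by
  classical
  set c : Fin p := ⟨m, hm⟩ with hcdef
  have hcard : (Fintype.card (X c) : ℝ) ≠ 0 := by exact_mod_cast Fintype.card_ne_zero
  have h1 : Sfun y x B (m+1)
      = ∑ u, ((if ∀ k ∈ B, u k = x k then (1:ℝ) else 0) * Ffun y m u) * (y c u (u c)) := by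
    unfold Sfun
    apply Finset.sum_congr rfl
    intro u _
    rw [Ffun_succ y m hm u]
    ring
  have h2 : (∑ u, ((if ∀ k ∈ B, u k = x k then (1:ℝ) else 0) * Ffun y m u) * (y c u (u c)))
      = ∑ u, ((if ∀ k ∈ B, u k = x k then (1:ℝ) else 0) * Ffun y m u)
          * (Fintype.card (X c) : ℝ)⁻¹ := by
    apply swap_aux c
    · intro u a
      congr 1
      · have heq : (∀ k ∈ B, Function.update u c a k = x k) ↔ (∀ k ∈ B, u k = x k) := by
          apply forall₂_congr
          intro k hk
          have hkc : k ≠ c := by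
            intro h
            have hh := hB k hk
            rw [h, hcdef] at hh
            simp at hh
          rw [Function.update_of_ne hkc a u]
        simp only [heq]
      · exact Ffun_update y Par hpar hy2 m c le_rfl u a
    · intro u
      have hterm : ∀ a : X c,
          y c (Function.update u c a) (Function.update u c a c) = y c u a := by
        intro a
        rw [Function.update_self, y_update y Par hpar hy2 c u a]
      rw [Finset.sum_congr rfl (fun a _ => hterm a), hy1 c u]
      simp [Finset.sum_const, hcard]
  rw [h1, h2, ← Finset.sum_mul]
  unfold Sfun
  field_simp

include hpar hy2 in
private lemma base_aux (hy1 : ∀ i v, ∑ a, y i v a = 1)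
    (x : (k : Fin p) → X k) (i : Fin p) :
    Sfun y x (insert i (Par i)) ((i : ℕ) + 1)
      = y i x (x i) * Sfun y x (Par i) ((i : ℕ) + 1) := by
  classical
  have hii : ((i : ℕ)) < p := i.isLt
  have hieq : (⟨(i : ℕ), hii⟩ : Fin p) = i := by simp [Fin.ext_iff]
  have c1 : Sfun y x (insert i (Par i)) ((i : ℕ) + 1)
      = y i x (x i) * ∑ u, (if ∀ k ∈ insert i (Par i), u k = x k then (1:ℝ) else 0)
          * Ffun y (i : ℕ) u := by
    unfold Sfun
    rw [Finset.mul_sum]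
    apply Finset.sum_congr rfl
    intro u _
    rw [Ffun_succ y (i : ℕ) hii u, hieq]
    by_cases hcond : ∀ k ∈ insert i (Par i), u k = x k
    · have h1 : y i u = y i x := hy2 i u x (fun k hk => hcond k (Finset.mem_insert_of_mem hk))
      have h2 : u i = x i := hcond i (Finset.mem_insert_self i _)
      rw [if_pos hcond, h1, h2]
      ring
    · rw [if_neg hcond]
      ring
  have c2 : Sfun y x (Par i) ((i : ℕ) + 1)
      = ∑ u, (if ∀ k ∈ insert i (Par i), u k = x k then (1:ℝ) else 0) * Ffun y (i : ℕ) u := by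
    have h1 : Sfun y x (Par i) ((i : ℕ) + 1)
        = ∑ u, ((if ∀ k ∈ Par i, u k = x k then (1:ℝ) else 0) * Ffun y (i : ℕ) u)
            * y i u (u i) := by
      unfold Sfun
      apply Finset.sum_congr rfl
      intro u _
      rw [Ffun_succ y (i : ℕ) hii u, hieq]
      ring
    have h2 : (∑ u, ((if ∀ k ∈ Par i, u k = x k then (1:ℝ) else 0) * Ffun y (i : ℕ) u)
            * y i u (u i))
        = ∑ u, ((if ∀ k ∈ Par i, u k = x k then (1:ℝ) else 0) * Ffun y (i : ℕ) u)
            * (if u i = x i then (1:ℝ) else 0) := by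
      apply swap_aux i
      · intro u a
        congr 1
        · have heq : (∀ k ∈ Par i, Function.update u i a k = x k)
              ↔ (∀ k ∈ Par i, u k = x k) := by
            apply forall₂_congr
            intro k hk
            rw [Function.update_of_ne (Fin.ne_of_lt (hpar i k hk)) a u]
          simp only [heq]
        · exact Ffun_update y Par hpar hy2 (i : ℕ) i le_rfl u a
      · intro u
        have hterm : ∀ a : X i,
            y i (Function.update u i a) (Function.update u i a i) = y i u a := by
          intro a
          rw [Function.update_self, y_update y Par hpar hy2 i u a]
        rw [Finset.sum_congr rfl (fun a _ => hterm a), hy1 i u]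
        simp
    rw [h1, h2]
    apply Finset.sum_congr rfl
    intro u _
    by_cases ha : u i = x i <;> by_cases hb : ∀ k ∈ Par i, u k = x k <;>
      simp [Finset.forall_mem_insert, ha, hb]
  rw [c1, c2]

include hpar hy2 in
private lemma key_aux (hy1 : ∀ i v, ∑ a, y i v a = 1)
    (x : (k : Fin p) → X k) (i : Fin p) :
    Sfun y x (insert i (Par i)) p = y i x (x i) * Sfun y x (Par i) p := by
  have main : ∀ m, (i : ℕ) + 1 ≤ m → m ≤ p →
      Sfun y x (insert i (Par i)) m = y i x (x i) * Sfun y x (Par i) m := by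
    intro m hm
    induction m, hm using Nat.le_induction with
    | base => intro _; exact base_aux y Par hpar hy2 hy1 x i
    | succ m hm ih =>
      intro hmp
      have hm' : m < p := hmp
      have hB1 : ∀ k ∈ insert i (Par i), (k : ℕ) < m := by
        intro k hk
        rcases Finset.mem_insert.mp hk with h | h
        · subst h; omega
        · have hki : (k : ℕ) < (i : ℕ) := hpar i k h
          omega
      have hB2 : ∀ k ∈ Par i, (k : ℕ) < m := fun k hk => by
        have hki : (k : ℕ) < (i : ℕ) := hpar i k hk
        omega
      have h1 := step_aux y Par hpar hy2 hy1 x (insert i (Par i)) m hm' hB1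
      have h2 := step_aux y Par hpar hy2 hy1 x (Par i) m hm' hB2
      have h3 := ih (le_of_lt hm')
      have hc : (Fintype.card (X ⟨m, hm'⟩) : ℝ) ≠ 0 := by
        exact_mod_cast Fintype.card_ne_zero
      apply mul_left_cancel₀ hc
      rw [← h1, h3, h2]
      ring
  exact main p i.isLt le_rfl

private lemma margSet_eq_Sfun (x : (k : Fin p) → X k) (B : Finset (Fin p)) :
    margSet (fun u => ∏ j, y j u (u j)) B x = Sfun y x B p := by
  unfold margSet Sfun Ffun
  apply Finset.sum_congr rfl
  intro u _
  have hfil : Finset.univ.filter (fun j : Fin p => (j : ℕ) < p) = Finset.univ := by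
    apply Finset.filter_true_of_mem
    intro j _
    exact j.isLt
  rw [hfil]
  by_cases h : ∀ k ∈ B, u k = x k <;> simp [h]

private lemma margSet_pos (P : ((k : Fin p) → X k) → ℝ) (hpos : ∀ u, 0 < P u)
    (B : Finset (Fin p)) (w : (k : Fin p) → X k) : 0 < margSet P B w := by
  classical
  unfold margSet
  apply Finset.sum_pos'
  · intro u _
    split_ifs
    · exact le_of_lt (hpos u)
    · exact le_refl 0
  · refine ⟨w, Finset.mem_univ w, ?_⟩
    rw [if_pos (fun k _ => rfl)]
    exact hpos w

private lemma margSet_congr (P : ((k : Fin p) → X k) → ℝ) (B : Finset (Fin p))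
    (v w : (k : Fin p) → X k) (h : ∀ k ∈ B, v k = w k) :
    margSet P B v = margSet P B w := by
  classical
  unfold margSet
  apply Finset.sum_congr rfl
  intro u _
  have heq : (∀ k ∈ B, u k = v k) ↔ (∀ k ∈ B, u k = w k) :=
    forall₂_congr fun k hk => by rw [h k hk]
  exact if_congr heq rfl rfl

private lemma margSet_funext (P Q : ((k : Fin p) → X k) → ℝ) (hPQ : ∀ u, P u = Q u)
    (B : Finset (Fin p)) (w : (k : Fin p) → X k) :
    margSet P B w = margSet Q B w := by
  unfold margSet
  apply Finset.sum_congr rfl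
  intro u _
  rw [hPQ u]

private lemma margSet_sum (P : ((k : Fin p) → X k) → ℝ) (i : Fin p)
    (B : Finset (Fin p)) (hne : ∀ k ∈ B, k ≠ i) (v : (k : Fin p) → X k) :
    ∑ a : X i, margSet P (insert i B) (Function.update v i a) = margSet P B v := by
  classical
  unfold margSet
  rw [Finset.sum_comm]
  apply Finset.sum_congr rfl
  intro u _
  have hcond : ∀ a : X i, (∀ k ∈ insert i B, u k = Function.update v i a k)
      ↔ (u i = a ∧ ∀ k ∈ B, u k = v k) := by
    intro a
    rw [Finset.forall_mem_insert]
    constructor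
    · rintro ⟨h1, h2⟩
      refine ⟨by rw [h1, Function.update_self], fun k hk => ?_⟩
      have h3 := h2 k hk
      rwa [Function.update_of_ne (hne k hk) a v] at h3
    · rintro ⟨h1, h2⟩
      refine ⟨by rw [h1, Function.update_self], fun k hk => ?_⟩
      rw [Function.update_of_ne (hne k hk) a v]
      exact h2 k hk
  by_cases hC : ∀ k ∈ B, u k = v k
  · rw [if_pos hC]
    have hterm : ∀ a : X i,
        (if ∀ k ∈ insert i B, u k = Function.update v i a k then P u else 0)
          = if u i = a then P u else 0 := by
      intro a
      rw [if_congr (hcond a) rfl rfl]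
      exact if_congr (and_iff_left hC) rfl rfl
    rw [Finset.sum_congr rfl (fun a _ => hterm a)]
    simp
  · rw [if_neg hC]
    have hterm : ∀ a : X i,
        (if ∀ k ∈ insert i B, u k = Function.update v i a k then P u else 0) = 0 := by
      intro a
      rw [if_congr (hcond a) rfl rfl]
      rw [if_neg]
      rintro ⟨-, h2⟩
      exact hC h2
    rw [Finset.sum_congr rfl (fun a _ => hterm a)]
    simp

end Aux

end AuxST

/--
A strictly positive probability mass function `P` on `X_1 × … × X_p` is Markov to
the DAG `G` with parent map `Par` if and only if `P` belongs to the staged tree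
model `M(~^G)` of the staging `~^G` of `T_G`.  Consequently the Bayesian network
model `M_G` equals `M(~^G)`.
-/
theorem markov_iff_memModel_TG {X : Fin p → Type}
    [∀ k, Fintype (X k)] [∀ k, Nonempty (X k)]
    (Par : Fin p → Finset (Fin p)) (hpar : ∀ i : Fin p, ∀ j ∈ Par i, j < i)
    (P : ((k : Fin p) → X k) → ℝ)
    (hpos : ∀ x, 0 < P x) (hsum : ∑ x, P x = 1) :
    Markov Par P ↔ memModel (relG Par) P := by
  constructor
  · intro hM
    refine ⟨hpos, hsum,
      fun i v a => margSet P (insert i (Par i)) (Function.update v i a)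
        / margSet P (Par i) v, ?_, ?_, ?_, ?_⟩
    · intro i v a
      exact div_pos (margSet_pos P hpos _ _) (margSet_pos P hpos _ _)
    · intro i v
      rw [← Finset.sum_div,
        margSet_sum P i (Par i) (fun k hk => Fin.ne_of_lt (hpar i k hk)) v]
      exact div_self (ne_of_gt (margSet_pos P hpos _ _))
    · intro i v w hrel
      funext a
      have h1 : margSet P (insert i (Par i)) (Function.update v i a)
          = margSet P (insert i (Par i)) (Function.update w i a) := by
        apply margSet_congr
        intro k hk
        rcases Finset.mem_insert.mp hk with h | h
        · subst h
          rw [Function.update_self, Function.update_self]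
        · have hki : k ≠ i := Fin.ne_of_lt (hpar i k h)
          rw [Function.update_of_ne hki a v, Function.update_of_ne hki a w]
          exact hrel k h
      have h2 : margSet P (Par i) v = margSet P (Par i) w := margSet_congr P _ v w hrel
      simp only [h1, h2]
    · intro x
      have h := hM x
      rw [h]
      apply Finset.prod_congr rfl
      intro i _
      simp only [Function.update_eq_self]
  · rintro ⟨hpos', hsum', y, hy0, hy1, hy2, hyP⟩
    intro x
    have hratio : ∀ i : Fin p,
        margSet P (insert i (Par i)) x / margSet P (Par i) x = y i x (x i) := by
      intro i
      have hD : Sfun y x (Par i) p ≠ 0 := by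
        rw [← margSet_eq_Sfun, ← margSet_funext P _ hyP]
        exact ne_of_gt (margSet_pos P hpos _ _)
      rw [margSet_funext P _ hyP, margSet_funext P _ hyP, margSet_eq_Sfun,
        margSet_eq_Sfun, key_aux y Par hpar hy2 hy1 x i, mul_div_assoc,
        div_self hD, mul_one]
    rw [Finset.prod_congr rfl (fun i (_ : i ∈ Finset.univ) => hratio i)]
    exact hyP x
end

section
/- Assume each X_i has at least two elements. For two stagings σ and ~ on the same event tree, M(~) ⊆ M(σ) if and only if σ_i ⊆ ~_i for all i: containment of staged tree models is equivalent to refinement of stagings. -/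
/-!
Encoding: a depth-(i-1) vertex of the `X`-compatible event tree (a context
`v ∈ X_1 × … × X_{i-1}`) is represented by any full assignment
`v : (k : Fin p) → X k`, of which only the coordinates `k < i` are relevant.
-/

variable {p : ℕ}

lemma agreeBelow_zero {n : ℕ} {X : Fin (n+1) → Type} (v w : (k : Fin (n+1)) → X k) :
    agreeBelow 0 v w := by
  intro k hk
  exact absurd hk (by simp [Fin.lt_iff_val_lt_val])

lemma agreeBelow_cons {n : ℕ} {X : Fin (n+1) → Type} (a : X 0) {i : Fin n}
    {t t' : (k : Fin n) → X k.succ} (h : agreeBelow i t t') :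
    agreeBelow i.succ (Fin.cons a t) (Fin.cons a t' : (k : Fin (n+1)) → X k) := by
  intro k hk
  induction k using Fin.cases with
  | zero => simp
  | succ j =>
    simp only [Fin.cons_succ]
    exact h j (by simpa [Fin.succ_lt_succ_iff] using hk)

lemma sumProd : ∀ {p : ℕ} {X : Fin p → Type} [∀ k, Fintype (X k)] [∀ k, Nonempty (X k)]
    (y : (i : Fin p) → ((k : Fin p) → X k) → X i → ℝ),
    (∀ i v, ∑ x, y i v x = 1) →
    (∀ i v w, agreeBelow i v w → y i v = y i w) →
    ∑ x, ∏ i, y i x (x i) = 1 := by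
  intro p
  induction p with
  | zero => intro X _ _ y _ _; simp
  | succ n ih =>
    intro X _ _ y hsum hmeas
    have hre : ∑ x : (k : Fin (n+1)) → X k, ∏ i, y i x (x i)
        = ∑ z : X 0 × ((k : Fin n) → X k.succ), ∏ i, y i (Fin.consEquiv X z) ((Fin.consEquiv X z) i) :=
      (Fintype.sum_equiv (Fin.consEquiv X) _ _ (fun z => rfl)).symm
    rw [hre, Fintype.sum_prod_type]
    have key : ∀ (a : X 0), ∑ t : (k : Fin n) → X k.succ,
        ∏ i, y i (Fin.consEquiv X (a, t)) ((Fin.consEquiv X (a, t)) i)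
        = y 0 (Fin.consEquiv X (a, Classical.arbitrary _)) a := by
      intro a
      have : ∀ t : (k : Fin n) → X k.succ,
          ∏ i, y i (Fin.consEquiv X (a, t)) ((Fin.consEquiv X (a, t)) i)
          = y 0 (Fin.consEquiv X (a, Classical.arbitrary _)) a *
            ∏ i : Fin n, y i.succ (Fin.cons a t) (t i) := by
        intro t
        show ∏ i, y i (Fin.cons a t) ((Fin.cons a t) i) = _
        rw [Fin.prod_univ_succ, Fin.cons_zero,
          hmeas 0 (Fin.cons a t) (Fin.consEquiv X (a, Classical.arbitrary _))
            (agreeBelow_zero _ _)]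
        simp only [Fin.cons_succ]
      simp only [this, ← Finset.mul_sum]
      rw [ih (fun i t x => y i.succ (Fin.cons a t) x)
          (fun i t => hsum i.succ (Fin.cons a t))
          (fun i t t' h => hmeas i.succ _ _ (agreeBelow_cons a h)), mul_one]
    calc ∑ a : X 0, ∑ t, ∏ i, y i (Fin.consEquiv X (a, t)) ((Fin.consEquiv X (a, t)) i)
        = ∑ a : X 0, y 0 (Fin.consEquiv X (a, Classical.arbitrary _)) a := by
          exact Finset.sum_congr rfl (fun a _ => key a)
      _ = 1 := by
          have h2 : ∀ a : X 0, y 0 (Fin.consEquiv X (a, Classical.arbitrary _)) a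
              = y 0 (Classical.arbitrary _) a := fun a => by
            rw [hmeas 0 _ _ (agreeBelow_zero _ _)]
          simp only [h2]
          exact hsum 0 _

lemma factorization_unique :
    ∀ {p : ℕ} {X : Fin p → Type} [∀ k, Fintype (X k)] [∀ k, Nonempty (X k)]
    (y y' : (i : Fin p) → ((k : Fin p) → X k) → X i → ℝ),
    (∀ i v x, 0 < y i v x) → (∀ i v, ∑ x, y i v x = 1) →
    (∀ i v w, agreeBelow i v w → y i v = y i w) →
    (∀ i v x, 0 < y' i v x) → (∀ i v, ∑ x, y' i v x = 1) →
    (∀ i v w, agreeBelow i v w → y' i v = y' i w) →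
    (∀ x, ∏ i, y i x (x i) = ∏ i, y' i x (x i)) →
    ∀ i v, y i v = y' i v := by
  intro p
  induction p with
  | zero => intro X _ _ y y' _ _ _ _ _ _ _ i; exact absurd i.2 (by simp)
  | succ n ih =>
    intro X _ _ y y' hpos hsum hmeas hpos' hsum' hmeas' heq
    -- step 1 : level 0
    have h0 : ∀ u, y 0 u = y' 0 u := by
      intro u
      funext a
      have e1 : ∀ (z : (j : Fin (n+1)) → ((k : Fin (n+1)) → X k) → X j → ℝ),
          (∀ i v, ∑ x, z i v x = 1) →
          (∀ i v w, agreeBelow i v w → z i v = z i w) →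
          z 0 u a = ∑ t : (k : Fin n) → X k.succ,
            ∏ i, z i (Fin.cons a t) ((Fin.cons a t : (k : Fin (n+1)) → X k) i) := by
        intro z hzsum hzmeas
        have hz0 : ∀ t : (k : Fin n) → X k.succ, z 0 (Fin.cons a t) = z 0 u :=
          fun t => hzmeas 0 _ _ (agreeBelow_zero _ _)
        have : ∀ t : (k : Fin n) → X k.succ,
            ∏ i, z i (Fin.cons a t) ((Fin.cons a t : (k : Fin (n+1)) → X k) i)
            = z 0 u a * ∏ i : Fin n, z i.succ (Fin.cons a t) (t i) := by
          intro t
          rw [Fin.prod_univ_succ, Fin.cons_zero, hz0 t]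
          simp only [Fin.cons_succ]
        simp only [this, ← Finset.mul_sum]
        rw [sumProd (fun i t x => z i.succ (Fin.cons a t) x)
            (fun i t => hzsum i.succ (Fin.cons a t))
            (fun i t t' h => hzmeas i.succ _ _ (agreeBelow_cons a h)), mul_one]
      rw [e1 y hsum hmeas, e1 y' hsum' hmeas']
      exact Finset.sum_congr rfl (fun t _ => heq _)
    -- step 2 : higher levels
    intro i v
    induction i using Fin.cases with
    | zero => exact h0 v
    | succ j =>
      set a := v 0 with ha
      have key : ∀ t : (k : Fin n) → X k.succ,
          ∀ jj : Fin n, y jj.succ (Fin.cons a t) = y' jj.succ (Fin.cons a t) := by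
        have hprod : ∀ t : (k : Fin n) → X k.succ,
            ∏ i : Fin n, y i.succ (Fin.cons a t) (t i)
            = ∏ i : Fin n, y' i.succ (Fin.cons a t) (t i) := by
          intro t
          have hx := heq (Fin.cons a t)
          rw [Fin.prod_univ_succ, Fin.prod_univ_succ] at hx
          simp only [Fin.cons_zero, Fin.cons_succ] at hx
          rw [h0 (Fin.cons a t)] at hx
          exact mul_left_cancel₀ (ne_of_gt (hpos' 0 (Fin.cons a t) a)) hx
        intro t jj
        exact ih (fun i t x => y i.succ (Fin.cons a t) x)
          (fun i t x => y' i.succ (Fin.cons a t) x)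
          (fun i t x => hpos i.succ _ x) (fun i t => hsum i.succ _)
          (fun i t t' h => hmeas i.succ _ _ (agreeBelow_cons a h))
          (fun i t x => hpos' i.succ _ x) (fun i t => hsum' i.succ _)
          (fun i t t' h => hmeas' i.succ _ _ (agreeBelow_cons a h))
          hprod jj t
      have hv : Fin.cons a (Fin.tail v) = v := by
        rw [ha]; exact Fin.cons_self_tail v
      calc y j.succ v = y j.succ (Fin.cons a (Fin.tail v)) := by rw [hv]
        _ = y' j.succ (Fin.cons a (Fin.tail v)) := key (Fin.tail v) j
        _ = y' j.succ v := by rw [hv]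

lemma rel_of_agreeBelow {X : Fin p → Type} (S : Staging p X) (i : Fin p)
    (v w : (k : Fin p) → X k) (h : agreeBelow i v w) : S.rel i v w :=
  S.meas i v v v w (fun _ _ => rfl) h ((S.equiv i).refl v)

/--
Assume each `X i` has at least two elements.  For two stagings `σ` (here `S`) and
`~` (here `T`) on the same event tree, `M(~) ⊆ M(σ)` if and only if `σ_i ⊆ ~_i` for
all `i`: containment of staged tree models is equivalent to refinement of stagings.
-/
theorem model_subset_iff_refines {X : Fin p → Type}
    [∀ k, Fintype (X k)] [∀ k, Nontrivial (X k)] (S T : Staging p X) :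
    (∀ P : ((k : Fin p) → X k) → ℝ, memModel T.rel P → memModel S.rel P) ↔
      (∀ (i : Fin p) (v w : (k : Fin p) → X k), S.rel i v w → T.rel i v w) := by
  classical
  constructor
  · intro hsub i v w hS
    by_contra hT
    obtain ⟨a, b, hab⟩ := exists_pair_ne (X i)
    set c : ℝ := (2 * (Fintype.card (X i) : ℝ))⁻¹ with hc
    have hcard : (0 : ℝ) < (Fintype.card (X i) : ℝ) := by
      exact_mod_cast Fintype.card_pos
    have hcpos : 0 < c := by positivity
    -- the bump function on X i
    set bump : X i → ℝ := fun x => (if x = a then c else 0) - (if x = b then c else 0)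
      with hbump
    have hbumpsum : ∑ x, bump x = 0 := by
      simp [hbump, Finset.sum_sub_distrib]
    have hbumpge : ∀ x, -c ≤ bump x := by
      intro x
      simp only [hbump]
      split <;> split <;> simp_all
    -- the bump at every level (nonzero only at level i)
    set d : (j : Fin p) → X j → ℝ :=
      fun j => if h : j = i then (fun x => bump (cast (congrArg X h) x)) else (fun _ => 0)
      with hd
    have hdsum : ∀ j, ∑ x, d j x = 0 := by
      intro j
      by_cases h : j = i
      · subst h; simp [hd, hbumpsum]
      · simp [hd, h]
    set y : (j : Fin p) → ((k : Fin p) → X k) → X j → ℝ :=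
      fun j u x => (Fintype.card (X j) : ℝ)⁻¹ + (if T.rel j u v then d j x else 0)
      with hy
    have hconst : ∀ j u u', T.rel j u u' → y j u = y j u' := by
      intro j u u' h
      funext x
      have : T.rel j u v ↔ T.rel j u' v :=
        ⟨fun h2 => (T.equiv j).trans ((T.equiv j).symm h) h2,
         fun h2 => (T.equiv j).trans h h2⟩
      simp only [hy, this]
    have hmeasy : ∀ j u u', agreeBelow j u u' → y j u = y j u' :=
      fun j u u' h => hconst j u u' (rel_of_agreeBelow T j u u' h)
    have hpos : ∀ j u x, 0 < y j u x := by
      intro j u x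
      have hcardj : (0 : ℝ) < (Fintype.card (X j) : ℝ) := by
        exact_mod_cast Fintype.card_pos
      simp only [hy]
      split
      · by_cases h : j = i
        · subst h
          have hbx : -c ≤ d j x := by
            simp only [hd, dif_pos]
            exact hbumpge _
          have h2 : (Fintype.card (X j) : ℝ)⁻¹ = 2 * c := by
            rw [hc, mul_inv]; ring
          rw [h2]
          linarith
        · simp [hd, h]; positivity
      · positivity
    have hsum : ∀ j u, ∑ x, y j u x = 1 := by
      intro j u
      have hcardj : (0 : ℝ) < (Fintype.card (X j) : ℝ) := by
        exact_mod_cast Fintype.card_pos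
      simp only [hy]
      rw [Finset.sum_add_distrib]
      by_cases h : T.rel j u v <;>
        simp [h, hdsum j, Finset.sum_const, Finset.card_univ,
          mul_inv_cancel₀ (ne_of_gt hcardj)]
    set P : ((k : Fin p) → X k) → ℝ := fun x => ∏ j, y j x (x j) with hP
    have hmem : memModel T.rel P := by
      refine ⟨fun x => Finset.prod_pos (fun j _ => hpos j x (x j)),
        sumProd y hsum hmeasy, y, hpos, hsum, hconst, fun _ => rfl⟩
    obtain ⟨hP', hS1, y', hpos', hsum', hconst', hfac'⟩ := hsub P hmem
    have hmeasy' : ∀ j u u', agreeBelow j u u' → y' j u = y' j u' :=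
      fun j u u' h => hconst' j u u' (rel_of_agreeBelow S j u u' h)
    have huniq := factorization_unique y y' hpos hsum hmeasy hpos' hsum' hmeasy'
      (fun x => (hfac' x).symm ▸ rfl)
    have h1 : y i v = y i w := by
      rw [huniq i v, huniq i w, hconst' i v w hS]
    have h2 := congrFun h1 a
    have hTvw : ¬ T.rel i w v := fun h => hT ((T.equiv i).symm h)
    simp only [hy, if_pos ((T.equiv i).refl v), if_neg hTvw] at h2
    have hda : d i a = c := by
      simp [hd, hbump, hab]
    rw [hda] at h2
    exact (ne_of_gt hcpos) (by linarith)
  · rintro href P ⟨hpos, hsum, y, h1, h2, h3, h4⟩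
    exact ⟨hpos, hsum, y, h1, h2, fun i v w h => h3 i v w (href i v w h), h4⟩
end
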